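/- If X = Y × Z is a Cartesian product of irreducible multiprojective varieties Y ⊂ P^{n_I} and Z ⊂ P^{n_J} in disjoint factors, then for every e' ∈ Dim(Y) and e'' ∈ Dim(Z), the multidegree satisfies Deg_X(e',e'') = Deg_Y(e') · Deg_Z(e''), and the (e',e'')-witness point set of X is the Cartesian product of an e'-witness point set of Y with an e''-witness point set of Z. -/
import Mathlib


open scoped BigOperators

namespace MultiProj

variable {ι : Type*} [Fintype ι] [DecidableEq ι]

/-- Multiprojective space: a product of complex projective spaces `ℙ^{n i}`. -/
abbrev PStack (n : ι → ℕ) := (i : ι) → Projectivization ℂ (Fin (n i + 1) → ℂ)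

/-- A linear form (given by its coefficient vector) vanishes at a point of the
projectivization of a coordinate space. -/
def PLinVanish {κ : Type*} [Fintype κ] (c : κ → ℂ)
    (p : Projectivization ℂ (κ → ℂ)) : Prop :=
  ∀ (v : κ → ℂ) (hv : v ≠ 0), Projectivization.mk ℂ v hv = p → ∑ a, c a * v a = 0

/-- A polynomial in the multihomogeneous coordinates vanishes at a point of the
multiprojective space, i.e. at every system of homogeneous representatives. -/
def PolyVanish {n : ι → ℕ} (f : MvPolynomial ((i : ι) × Fin (n i + 1)) ℂ)
    (x : PStack n) : Prop :=
  ∀ v : (i : ι) → Fin (n i + 1) → ℂ,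
    (∀ i, ∃ hv : v i ≠ 0, Projectivization.mk ℂ (v i) hv = x i) →
    MvPolynomial.eval (fun p => v p.1 p.2) f = 0

/-- Algebraic subsets of multiprojective space. -/
def IsAlgebraicSet {n : ι → ℕ} (X : Set (PStack n)) : Prop :=
  ∃ F : Set (MvPolynomial ((i : ι) × Fin (n i + 1)) ℂ),
    X = {x | ∀ f ∈ F, PolyVanish f x}

/-- Irreducible multiprojective varieties: nonempty algebraic sets that are not
contained in the union of two algebraic sets without being contained in one. -/
def IsIrredVariety {n : ι → ℕ} (X : Set (PStack n)) : Prop :=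
  IsAlgebraicSet X ∧ X.Nonempty ∧
    ∀ A B : Set (PStack n), IsAlgebraicSet A → IsAlgebraicSet B →
      X ⊆ A ∪ B → (X ⊆ A ∨ X ⊆ B)

/-- An irreducible component of a multiprojective variety. -/
def IsComponentOf {n : ι → ℕ} (Y X : Set (PStack n)) : Prop :=
  IsIrredVariety Y ∧ Y ⊆ X ∧
    ∀ Y' : Set (PStack n), IsIrredVariety Y' → Y ⊆ Y' → Y' ⊆ X → Y' = Y

/-- Parameter space for a multilinear slice of type `e`: `e i` linear forms in
the variables of the `i`-th factor. -/
abbrev SliceParams (n : ι → ℕ) (e : ι → ℕ) :=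
  (i : ι) → Fin (e i) → (Fin (n i + 1) → ℂ)

/-- The common zero set in multiprojective space of a multilinear slice. -/
def SliceZeros {n : ι → ℕ} {e : ι → ℕ} (L : SliceParams n e) : Set (PStack n) :=
  {x | ∀ (i : ι) (j : Fin (e i)), PLinVanish (L i j) (x i)}

/-- A property holds generically (on a dense open set) of a parameter. -/
def Generic {α : Type*} [TopologicalSpace α] (P : α → Prop) : Prop :=
  ∃ U : Set α, IsOpen U ∧ Dense U ∧ ∀ a ∈ U, P a

/-- The multidimension `Dim(X)`: the set of vectors `e` such that a general
multilinear slice of type `e` meets `X` in finitely many, and at least one, points. -/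
def MDim {n : ι → ℕ} (X : Set (PStack n)) : Set (ι → ℕ) :=
  {e | (∀ i, e i ≤ n i) ∧
    Generic (fun L : SliceParams n e =>
      (X ∩ SliceZeros L).Finite ∧ (X ∩ SliceZeros L).Nonempty)}

/-- `Deg_X(e) = d`: a general multilinear slice of type `e` meets `X` in exactly
`d` points. -/
def DegIs {n : ι → ℕ} (X : Set (PStack n)) (e : ι → ℕ) (d : ℕ) : Prop :=
  Generic (fun L : SliceParams n e =>
    (X ∩ SliceZeros L).Finite ∧ (X ∩ SliceZeros L).ncard = d)

/-- The intrinsic dimension of a multiprojective variety, read off as the common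
total degree of the vectors in its multidimension. -/
noncomputable def dimOf {n : ι → ℕ} (X : Set (PStack n)) : ℕ :=
  sSup {m | ∃ e ∈ MDim X, ∑ i, e i = m}

/-- Projection of the multiprojective space onto the factors indexed by `I`. -/
def resMap {n : ι → ℕ} (I : Finset ι) (x : PStack n) :
    PStack (fun i : {j // j ∈ I} => n i.1) :=
  fun i => x i.1

/-- `dim π_I(X)`: the dimension of the projection of `X` onto the factors
indexed by `I`. -/
noncomputable def dimProj {n : ι → ℕ} (I : Finset ι) (X : Set (PStack n)) : ℕ :=
  dimOf (resMap I '' X)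

/-- An equidimensional multiprojective variety: all irreducible components have
the same multidimension. -/
def Equidimensional {n : ι → ℕ} (X : Set (PStack n)) : Prop :=
  IsAlgebraicSet X ∧ X.Nonempty ∧
    ∀ Y Y' : Set (PStack n), IsComponentOf Y X → IsComponentOf Y' X →
      MDim Y = MDim Y'

/-- The set of lattice points of a polymatroid polytope inside the box `[n]`,
cut out by a submodular, monotone rank function. -/
def IsPolymatroidSet (n : ι → ℕ) (P : Set (ι → ℕ)) : Prop :=
  ∃ r : Finset ι → ℕ,
    (∀ A B : Finset ι, r (A ∪ B) + r (A ∩ B) ≤ r A + r B) ∧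
    (∀ A B : Finset ι, A ⊆ B → r A ≤ r B) ∧
    P = {e | (∀ i, e i ≤ n i) ∧ (∑ i, e i = r Finset.univ) ∧
          ∀ S : Finset ι, ∑ i ∈ S, e i ≤ r S}

section Product

variable {ι₁ ι₂ : Type*} [Fintype ι₁] [DecidableEq ι₁] [Fintype ι₂] [DecidableEq ι₂]

/-- Combine points of two multiprojective spaces into a point of the product
multiprojective space, indexed by the disjoint union of the index sets. -/
def combine {n₁ : ι₁ → ℕ} {n₂ : ι₂ → ℕ} (y : PStack n₁) (z : PStack n₂) :
    PStack (Sum.elim n₁ n₂) := fun i =>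
  match i with
  | Sum.inl a => y a
  | Sum.inr b => z b

/-- The Cartesian product of multiprojective varieties in disjoint factors. -/
def prodSet {n₁ : ι₁ → ℕ} {n₂ : ι₂ → ℕ} (Y : Set (PStack n₁)) (Z : Set (PStack n₂)) :
    Set (PStack (Sum.elim n₁ n₂)) :=
  {x | ∃ y ∈ Y, ∃ z ∈ Z, x = combine y z}

/-- Projection of the product multiprojective space onto the first group of factors. -/
def projL {n₁ : ι₁ → ℕ} {n₂ : ι₂ → ℕ} (x : PStack (Sum.elim n₁ n₂)) : PStack n₁ :=
  fun a => x (Sum.inl a)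

/-- Projection of the product multiprojective space onto the second group of factors. -/
def projR {n₁ : ι₁ → ℕ} {n₂ : ι₂ → ℕ} (x : PStack (Sum.elim n₁ n₂)) : PStack n₂ :=
  fun b => x (Sum.inr b)

end Product

section Segre

/-- Degree `δ` of a subset `S` of the projective space `ℙ(ℂ^κ)` of dimension `d`:
a general collection of `d` hyperplanes meets `S` in exactly `δ` points. -/
def ProjDegIs {κ : Type*} [Fintype κ] (S : Set (Projectivization ℂ (κ → ℂ)))
    (d : ℕ) (δ : ℕ) : Prop :=
  Generic (fun c : Fin d → κ → ℂ =>
    (S ∩ {p | ∀ j, PLinVanish (c j) p}).Finite ∧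
    (S ∩ {p | ∀ j, PLinVanish (c j) p}).ncard = δ)

/-- `σ` is a Segre embedding: on homogeneous representatives it is given by the
tensor (outer) product of the coordinate vectors of the factors. -/
def IsSegreMap (n : ι → ℕ)
    (σ : PStack n → Projectivization ℂ (((i : ι) → Fin (n i + 1)) → ℂ)) : Prop :=
  ∀ (x : PStack n) (v : (i : ι) → Fin (n i + 1) → ℂ),
    (∀ i, ∃ hv : v i ≠ 0, Projectivization.mk ℂ (v i) hv = x i) →
    ∃ h : (fun a : (i : ι) → Fin (n i + 1) => ∏ i, v i (a i)) ≠ 0,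
      Projectivization.mk ℂ (fun a : (i : ι) → Fin (n i + 1) => ∏ i, v i (a i)) h = σ x

end Segre

end MultiProj

section Aux

open MultiProj

/-- Homeomorphism version of `Equiv.sumPiEquivProdPi`. -/
def homeoSumPi {ι ι' : Type*} (π : ι ⊕ ι' → Type*) [∀ i, TopologicalSpace (π i)] :
    ((i : ι ⊕ ι') → π i) ≃ₜ ((i : ι) → π (Sum.inl i)) × ((i' : ι') → π (Sum.inr i')) where
  toEquiv := Equiv.sumPiEquivProdPi π
  continuous_toFun := by
    refine Continuous.prodMk ?_ ?_ <;> exact continuous_pi fun i => continuous_apply _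
  continuous_invFun := by
    refine continuous_pi fun i => ?_
    cases i with
    | inl a => exact (continuous_apply a).comp continuous_fst
    | inr b => exact (continuous_apply b).comp continuous_snd

variable {ι₁ ι₂ : Type*} [Fintype ι₁] [DecidableEq ι₁] [Fintype ι₂] [DecidableEq ι₂]
  {n₁ : ι₁ → ℕ} {n₂ : ι₂ → ℕ}

lemma combine_inj :
    Function.Injective (fun p : PStack n₁ × PStack n₂ => combine p.1 p.2) := by
  rintro ⟨y, z⟩ ⟨y', z'⟩ h
  simp only [Prod.mk.injEq]
  constructor
  · funext a; exact congrFun h (Sum.inl a)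
  · funext b; exact congrFun h (Sum.inr b)

lemma prodSet_eq_image (A : Set (PStack n₁)) (B : Set (PStack n₂)) :
    prodSet A B = (fun p : PStack n₁ × PStack n₂ => combine p.1 p.2) '' (A ×ˢ B) := by
  ext x
  constructor
  · rintro ⟨y, hy, z, hz, rfl⟩; exact ⟨⟨y, z⟩, ⟨hy, hz⟩, rfl⟩
  · rintro ⟨⟨y, z⟩, ⟨hy, hz⟩, rfl⟩; exact ⟨y, hy, z, hz, rfl⟩

lemma prodSet_finite {A : Set (PStack n₁)} {B : Set (PStack n₂)}
    (hA : A.Finite) (hB : B.Finite) : (prodSet A B).Finite := by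
  rw [prodSet_eq_image]; exact (hA.prod hB).image _

lemma prodSet_ncard (A : Set (PStack n₁)) (B : Set (PStack n₂)) :
    (prodSet A B).ncard = A.ncard * B.ncard := by
  rw [prodSet_eq_image, Set.ncard_image_of_injective _ combine_inj,
    ← Nat.card_coe_set_eq, ← Nat.card_coe_set_eq, ← Nat.card_coe_set_eq,
    ← Nat.card_prod]
  exact Nat.card_congr (Equiv.Set.prod A B)

lemma slice_split {e' : ι₁ → ℕ} {e'' : ι₂ → ℕ} (Y : Set (PStack n₁)) (Z : Set (PStack n₂))
    (L : SliceParams (Sum.elim n₁ n₂) (Sum.elim e' e'')) :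
    prodSet Y Z ∩ SliceZeros L =
      prodSet (Y ∩ SliceZeros (fun a => L (Sum.inl a)))
              (Z ∩ SliceZeros (fun b => L (Sum.inr b))) := by
  ext x
  constructor
  · rintro ⟨⟨y, hy, z, hz, rfl⟩, hs⟩
    exact ⟨y, ⟨hy, fun a j => hs (Sum.inl a) j⟩, z, ⟨hz, fun b j => hs (Sum.inr b) j⟩, rfl⟩
  · rintro ⟨y, ⟨hy, hy'⟩, z, ⟨hz, hz'⟩, rfl⟩
    refine ⟨⟨y, hy, z, hz, rfl⟩, fun i j => ?_⟩
    cases i with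
    | inl a => exact hy' a j
    | inr b => exact hz' b j

end Aux

open MultiProj

/-- For a Cartesian product `X = Y × Z` of irreducible multiprojective
varieties in disjoint factors, multidegrees multiply, and every `(e',e'')`-witness
point set of `X` is the Cartesian product of an `e'`-witness point set of `Y` with an
`e''`-witness point set of `Z`. -/
theorem prod_deg_and_witness {ι₁ ι₂ : Type*}
    [Fintype ι₁] [DecidableEq ι₁] [Fintype ι₂] [DecidableEq ι₂]
    {n₁ : ι₁ → ℕ} {n₂ : ι₂ → ℕ}
    (Y : Set (PStack n₁)) (Z : Set (PStack n₂))
    (hY : IsIrredVariety Y) (hZ : IsIrredVariety Z)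
    (e' : ι₁ → ℕ) (e'' : ι₂ → ℕ) (he' : e' ∈ MDim Y) (he'' : e'' ∈ MDim Z)
    (d₁ d₂ : ℕ) (hd₁ : DegIs Y e' d₁) (hd₂ : DegIs Z e'' d₂) :
    DegIs (prodSet Y Z) (Sum.elim e' e'') (d₁ * d₂) ∧
    ∀ L : SliceParams (Sum.elim n₁ n₂) (Sum.elim e' e''),
      prodSet Y Z ∩ SliceZeros L =
        prodSet (Y ∩ SliceZeros (fun a => L (Sum.inl a)))
                (Z ∩ SliceZeros (fun b => L (Sum.inr b))) := by
  refine ⟨?_, slice_split Y Z⟩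
  obtain ⟨U₁, hU₁o, hU₁d, hU₁⟩ := hd₁
  obtain ⟨U₂, hU₂o, hU₂d, hU₂⟩ := hd₂
  let h := homeoSumPi
    (fun i : ι₁ ⊕ ι₂ => Fin (Sum.elim e' e'' i) → Fin (Sum.elim n₁ n₂ i + 1) → ℂ)
  refine ⟨h ⁻¹' (U₁ ×ˢ U₂), (hU₁o.prod hU₂o).preimage h.continuous,
    (hU₁d.prod hU₂d).preimage h.isOpenMap, ?_⟩
  intro L hL
  have h1 := hU₁ _ hL.1
  have h2 := hU₂ _ hL.2
  rw [slice_split Y Z L]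
  exact ⟨prodSet_finite h1.1 h2.1, by rw [prodSet_ncard]; exact congrArg₂ (· * ·) h1.2 h2.2⟩
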